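/- Let p be a prime, R a commutative ring of characteristic p, and G a finite abelian p-group. The map sending a prime ideal 𝔭 of R to the ideal 𝔭_G := ε⁻¹(𝔭) of R[G] (the preimage of 𝔭 under the augmentation map ε) is a bijection from the prime spectrum of R onto the prime spectrum of R[G]; moreover, 𝔭 is a maximal ideal of R if and only if 𝔭_G is a maximal ideal of R[G]. -/

import Mathlib

/-- The augmentation map of the group algebra `R[G]`: the `R`-algebra homomorphism
sending every group element to `1`. -/
noncomputable def augmentation (R : Type*) [CommRing R] (G : Type*) [CommGroup G] :
    MonoidAlgebra R G →ₐ[R] R :=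
  MonoidAlgebra.lift R R G 1

/-!
The augmentation ideal of `R[G]` is generated by the elements `g - 1`. If `g ^ p ^ k = 1` then
`(g - 1) ^ p ^ k = g ^ p ^ k - 1 = 0` by the Frobenius, so the augmentation ideal is nil. Hence
`ε : R[G] → R` is a surjection with nil kernel, and such a map induces a bijection on prime
spectra; maximality transfers along any surjection.
-/

theorem isNilpotent_sub_one_of_pow_expChar_pow_eq_one {A : Type*} [CommRing A] {p : ℕ}
    [ExpChar A p] {u : A} {k : ℕ} (hu : u ^ p ^ k = 1) : IsNilpotent (u - 1) :=
  ⟨p ^ k, by rw [sub_pow_expChar_pow, one_pow, hu, sub_self]⟩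

theorem Ideal.isMaximal_comap_iff_of_surjective {R S F : Type*} [CommRing R] [CommRing S]
    [FunLike F R S] [RingHomClass F R S] (f : F) (hf : Function.Surjective f) {K : Ideal S} :
    (K.comap f).IsMaximal ↔ K.IsMaximal := by
  refine ⟨fun hmax => ?_, fun _ => Ideal.comap_isMaximal_of_surjective f hf⟩
  rcases Ideal.map_eq_top_or_isMaximal_of_surjective f hf hmax with htop | hK
  · rw [Ideal.map_comap_of_surjective f hf, ← Ideal.comap_eq_top_iff (f := f)] at htop
    exact absurd htop hmax.ne_top
  · rwa [Ideal.map_comap_of_surjective f hf] at hK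

section augmentation

open MonoidAlgebra

variable {R : Type*} [CommRing R] {G : Type*} [CommGroup G]

theorem augmentation_single (g : G) (r : R) : augmentation R G (single g r) = r := by
  simp [augmentation, lift_single]

theorem augmentation_algebraMap (r : R) : augmentation R G (algebraMap R _ r) = r :=
  (augmentation R G).commutes r

theorem augmentation_surjective : Function.Surjective (augmentation R G) :=
  fun r => ⟨algebraMap R _ r, augmentation_algebraMap r⟩

theorem sub_algebraMap_augmentation_mem_span (x : MonoidAlgebra R G) :
    x - algebraMap R _ (augmentation R G x) ∈ Ideal.span (Set.range fun g : G => of R G g - 1) := by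
  induction x using MonoidAlgebra.induction_linear with
  | zero => simp
  | add a b ha hb =>
    rw [map_add, map_add, ← sub_add_sub_comm]
    exact Ideal.add_mem _ ha hb
  | single g r =>
    have hsingle : single g r - algebraMap R _ (augmentation R G (single g r)) =
        algebraMap R _ r * (of R G g - 1) := by
      rw [augmentation_single, mul_sub, mul_one, Algebra.algebraMap_eq_smul_one, smul_mul_assoc,
        one_mul, of_apply, smul_single', mul_one]
    rw [hsingle]
    exact Ideal.mul_mem_left _ _ (Ideal.subset_span ⟨g, rfl⟩)

theorem ker_augmentation_le_span :
    RingHom.ker (augmentation R G) ≤ Ideal.span (Set.range fun g : G => of R G g - 1) := by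
  intro x hx
  simpa [(RingHom.mem_ker).mp hx] using sub_algebraMap_augmentation_mem_span x

theorem ker_augmentation_le_nilradical {p : ℕ} [ExpChar R p] (hG : IsPGroup p G) :
    RingHom.ker (augmentation R G) ≤ nilradical (MonoidAlgebra R G) := by
  have : ExpChar (MonoidAlgebra R G) p :=
    expChar_of_injective_algebraMap (Function.LeftInverse.injective augmentation_algebraMap) p
  refine ker_augmentation_le_span.trans (Ideal.span_le.mpr ?_)
  rintro _ ⟨g, rfl⟩
  obtain ⟨k, hk⟩ := hG g
  exact isNilpotent_sub_one_of_pow_expChar_pow_eq_one (by rw [← map_pow, hk, map_one])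

end augmentation

theorem stmt1_general (p : ℕ) (hp : p.Prime) (R : Type*) [CommRing R] [CharP R p]
    (G : Type*) [CommGroup G] (hG : IsPGroup p G) :
    Function.Bijective (fun 𝔭 : PrimeSpectrum R =>
      PrimeSpectrum.comap (augmentation R G).toRingHom 𝔭) ∧
    ∀ 𝔭 : Ideal R, 𝔭.IsPrime →
      (𝔭.IsMaximal ↔ (Ideal.comap (augmentation R G) 𝔭).IsMaximal) := by
  have : Fact p.Prime := ⟨hp⟩
  have hsurj : Function.Surjective (augmentation R G) := augmentation_surjective
  refine ⟨?_, fun 𝔭 _ => (Ideal.isMaximal_comap_iff_of_surjective _ hsurj).symm⟩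
  refine (PrimeSpectrum.isHomeomorph_comap (augmentation R G).toRingHom (fun x => ⟨1, one_pos, ?_⟩)
    (ker_augmentation_le_nilradical hG)).bijective
  simpa using hsurj x

/-- For `R` a commutative ring of characteristic `p` and `G` a finite abelian
`p`-group, the map `𝔭 ↦ 𝔭_G := ε⁻¹(𝔭)` (preimage under the augmentation map) is a bijection
`Spec R ≃ Spec R[G]`, and `𝔭` is maximal iff `𝔭_G` is maximal. -/
theorem stmt1 (p : ℕ) (hp : p.Prime) (R : Type*) [CommRing R] [CharP R p]
    (G : Type*) [CommGroup G] [Fintype G] (hG : IsPGroup p G) :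
    Function.Bijective (fun 𝔭 : PrimeSpectrum R =>
      PrimeSpectrum.comap (augmentation R G).toRingHom 𝔭) ∧
    ∀ 𝔭 : Ideal R, 𝔭.IsPrime →
      (𝔭.IsMaximal ↔ (Ideal.comap (augmentation R G) 𝔭).IsMaximal) :=
  stmt1_general p hp R G hG
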